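/- Combining the two previous results: for even k, the minimum number of control nodes of a k-uniform hyperchain on n ≥ k nodes is exactly k−1; that is, there exists a set of k−1 nodes whose input matrix B makes 𝒞(A,B) = ℝⁿ, while no set of k−2 nodes does. -/

import Mathlib

/-! For the lower bound no structure of the hyperchain is needed. A contraction
`A v₁ ⋯ v_{k−1}` only sees index tuples with `k − 1` distinct entries, so if fewer than `k − 1`
nodes `S` are controlled, the vectors supported on `S` form a subspace containing the input
columns and closed under contraction; it is proper, hence so is `𝒞(A, B_S)`.

For the upper bound control the first `k − 1` nodes. The only hyperedges containing the window
`m − k + 1, …, m − 1` are the one ending at `m` and, when `k ≤ m`, the one starting at `m − k`.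
Contracting with the basis vectors of that window therefore gives `(e_m + e_{m−k}) / (k − 1)!`,
and strong induction on `m` puts every `e_m` into `𝒞(A, B)`. -/

noncomputable section
open Classical

/-- Prepend `j` to the index tuple `js`. -/
def consIdx {n k : ℕ} (j : Fin n) (js : Fin (k - 1) → Fin n) : Fin k → Fin n :=
  fun t => if h : (t : ℕ) = 0 then j
    else js ⟨(t : ℕ) - 1, by have := t.isLt; omega⟩

/-- Adjacency tensor of a `k`-uniform hypergraph with hyperedge set `E`. -/
def adjT (n k : ℕ) (E : Finset (Finset (Fin n))) : (Fin k → Fin n) → ℝ :=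
  fun j => if Function.Injective j ∧ Finset.image j Finset.univ ∈ E
    then ((Nat.factorial (k - 1) : ℝ))⁻¹ else 0

/-- Contraction of a `k`-th order tensor along `k−1` modes with vectors `v`. -/
def tcontract {n k : ℕ} (A : (Fin k → Fin n) → ℝ) (v : Fin (k - 1) → (Fin n → ℝ)) :
    Fin n → ℝ :=
  fun j => ∑ js : Fin (k - 1) → Fin n, A (consIdx j js) * ∏ i, v i (js i)

/-- The controllability subspace `𝒞(A,B)`: the smallest subspace of `ℝⁿ` containing the
set `Bc` of input columns and closed under the contraction map `v₁,…,v_{k−1} ↦ A v₁ ⋯ v_{k−1}`. -/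
def ctrlSpace {n k : ℕ} (A : (Fin k → Fin n) → ℝ) (Bc : Set (Fin n → ℝ)) :
    Submodule ℝ (Fin n → ℝ) :=
  sInf {W : Submodule ℝ (Fin n → ℝ) | Bc ⊆ ↑W ∧
    ∀ v : Fin (k - 1) → (Fin n → ℝ), (∀ i, v i ∈ W) → tcontract A v ∈ W}

/-- The hyperedge `{l, l+1, …, l+k−1}` of a `k`-uniform hyperchain. -/
def chainEdge (n k l : ℕ) : Finset (Fin n) :=
  Finset.univ.filter (fun i => l ≤ (i : ℕ) ∧ (i : ℕ) < l + k)

/-- The hyperedge set of the `k`-uniform hyperchain on `n` nodes. -/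
def chainE (n k : ℕ) : Finset (Finset (Fin n)) :=
  (Finset.range (n - k + 1)).image (chainEdge n k)

/-- Adjacency tensor of the complete `k`-uniform hypergraph on `n` nodes. -/
def completeT (n k : ℕ) : (Fin k → Fin n) → ℝ :=
  fun j => if Function.Injective j then ((Nat.factorial (k - 1) : ℝ))⁻¹ else 0

section
variable {n k : ℕ}

lemma consIdx_eq_cons (hk : 0 < k) (j : Fin n) (f : Fin (k - 1) → Fin n) :
    consIdx j f = Fin.cons j f ∘ finCongr (by omega) := by
  funext ⟨t, ht⟩
  cases t with
  | zero => rfl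
  | succ t => exact (Fin.cons_succ (α := fun _ => Fin n) j f ⟨t, by omega⟩).symm

lemma consIdx_injective_iff (hk : 0 < k) {j : Fin n} {f : Fin (k - 1) → Fin n} :
    Function.Injective (consIdx j f) ↔ j ∉ Set.range f ∧ Function.Injective f := by
  rw [consIdx_eq_cons hk,
    Function.Injective.of_comp_iff' _ (finCongr (by omega : k = k - 1 + 1)).bijective,
    Fin.cons_injective_iff]

lemma mem_image_consIdx (hk : 0 < k) {j x : Fin n} {f : Fin (k - 1) → Fin n} :
    x ∈ Finset.univ.image (consIdx j f) ↔ x = j ∨ x ∈ Set.range f := by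
  rw [mem_image_univ_iff_mem_range, consIdx_eq_cons hk,
    (finCongr (by omega : k = k - 1 + 1)).surjective.range_comp, Fin.range_cons, Set.mem_insert_iff]

lemma prod_pi_single_apply {ι : Type*} [Fintype ι] (f g : ι → Fin n) :
    ∏ i, (Pi.single (f i) (1 : ℝ) : Fin n → ℝ) (g i) = if g = f then 1 else 0 := by
  split_ifs with h
  · simp [h]
  · obtain ⟨i, hi⟩ := Function.ne_iff.mp h
    exact Finset.prod_eq_zero (Finset.mem_univ i) (Pi.single_eq_of_ne hi 1)

lemma tcontract_single (A : (Fin k → Fin n) → ℝ) (f : Fin (k - 1) → Fin n) :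
    tcontract A (fun i => Pi.single (f i) 1) = fun j => A (consIdx j f) := by
  funext j
  rw [tcontract,
    Fintype.sum_eq_single f fun g hg => by rw [prod_pi_single_apply, if_neg hg, mul_zero],
    prod_pi_single_apply, if_pos rfl, mul_one]

lemma subset_ctrlSpace (A : (Fin k → Fin n) → ℝ) (Bc : Set (Fin n → ℝ)) :
    Bc ⊆ ctrlSpace A Bc :=
  fun _ hx => Submodule.mem_sInf.mpr fun _ hW => hW.1 hx

lemma tcontract_mem_ctrlSpace {A : (Fin k → Fin n) → ℝ} {Bc : Set (Fin n → ℝ)}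
    {v : Fin (k - 1) → Fin n → ℝ} (hv : ∀ i, v i ∈ ctrlSpace A Bc) :
    tcontract A v ∈ ctrlSpace A Bc :=
  Submodule.mem_sInf.mpr fun W hW => hW.2 v fun i => Submodule.mem_sInf.mp (hv i) W hW

lemma ctrlSpace_le {A : (Fin k → Fin n) → ℝ} {Bc : Set (Fin n → ℝ)}
    {W : Submodule ℝ (Fin n → ℝ)} (hB : Bc ⊆ W)
    (hW : ∀ v : Fin (k - 1) → Fin n → ℝ, (∀ i, v i ∈ W) → tcontract A v ∈ W) :
    ctrlSpace A Bc ≤ W :=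
  sInf_le ⟨hB, hW⟩

lemma Submodule.eq_top_of_forall_single_mem {R ι : Type*} [Semiring R] [Finite ι]
    [DecidableEq ι] {W : Submodule R (ι → R)} (h : ∀ i, Pi.single i 1 ∈ W) : W = ⊤ := by
  rw [eq_top_iff, ← (Pi.basisFun R ι).span_eq, Submodule.span_le]
  rintro _ ⟨i, rfl⟩
  simpa using h i

lemma adjT_consIdx_eq_zero (hk : 0 < k) (E : Finset (Finset (Fin n))) (j : Fin n)
    {S : Finset (Fin n)} (hS : S.card < k - 1) {f : Fin (k - 1) → Fin n} (hf : ∀ i, f i ∈ S) :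
    adjT n k E (consIdx j f) = 0 := by
  refine if_neg fun ⟨hinj, _⟩ => hS.not_ge ?_
  have hfinj := ((consIdx_injective_iff hk).mp hinj).2
  simpa [Finset.card_image_of_injective _ hfinj] using
    Finset.card_le_card (s := Finset.univ.image f) (by simpa [Finset.subset_iff] using hf)

lemma ctrlSpace_adjT_le_pi_compl (hk : 0 < k) (E : Finset (Finset (Fin n))) {S : Finset (Fin n)}
    (hS : S.card < k - 1) :
    ctrlSpace (adjT n k E) {x | ∃ s ∈ S, x = Pi.single s 1} ≤ Submodule.pi (↑S)ᶜ fun _ => ⊥ := by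
  refine ctrlSpace_le ?_ fun v hv => ?_
  · rintro _ ⟨s, hs, rfl⟩ t ht
    exact (Submodule.mem_bot ℝ).mpr (Pi.single_eq_of_ne (by rintro rfl; exact ht hs) 1)
  · intro t ht
    refine Finset.sum_eq_zero fun f _ => ?_
    by_cases hf : ∀ i, f i ∈ S
    · rw [adjT_consIdx_eq_zero hk E t hS hf, zero_mul]
    · obtain ⟨i, hi⟩ := not_forall.mp hf
      rw [Finset.prod_eq_zero (Finset.mem_univ i) ((Submodule.mem_bot ℝ).mp (hv i (f i) hi)),
        mul_zero]

lemma ctrlSpace_adjT_ne_top (E : Finset (Finset (Fin n))) {S : Finset (Fin n)}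
    (hS : S.card < k - 1) (hkn : k - 1 ≤ n) :
    ctrlSpace (adjT n k E) {x | ∃ s ∈ S, x = Pi.single s 1} ≠ ⊤ := by
  obtain ⟨t, -, ht⟩ := Finset.exists_mem_notMem_of_card_lt_card
    (by simpa using hS.trans_le hkn : S.card < (Finset.univ : Finset (Fin n)).card)
  intro htop
  have hsingle := ctrlSpace_adjT_le_pi_compl (by omega) E hS
    (htop ▸ Submodule.mem_top (x := Pi.single t 1)) t ht
  simp at hsingle

def chainWindow (l : ℕ) (hl : l + (k - 1) < n) : Fin (k - 1) → Fin n :=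
  fun i => ⟨l + i, by omega⟩

lemma chainWindow_injective {l : ℕ} (hl : l + (k - 1) < n) :
    Function.Injective (chainWindow l hl) :=
  fun a b h => Fin.ext (by simpa [chainWindow] using h)

lemma mem_range_chainWindow {l : ℕ} (hl : l + (k - 1) < n) {x : Fin n} :
    x ∈ Set.range (chainWindow l hl) ↔ l ≤ x ∧ (x : ℕ) < l + (k - 1) := by
  constructor
  · rintro ⟨i, rfl⟩
    simp [chainWindow]
  · rintro ⟨h₁, h₂⟩
    exact ⟨⟨x - l, by omega⟩, Fin.ext (by simp [chainWindow]; omega)⟩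

lemma mem_chainEdge {l : ℕ} {x : Fin n} : x ∈ chainEdge n k l ↔ l ≤ x ∧ (x : ℕ) < l + k := by
  simp [chainEdge]

lemma chainEdge_eq_image_consIdx_iff (hk : 2 ≤ k) {l m : ℕ} (hl : l + (k - 1) < n)
    (hm : m + k ≤ n) {j : Fin n} (hj : j ∉ Set.range (chainWindow l hl)) :
    chainEdge n k m = Finset.univ.image (consIdx j (chainWindow l hl)) ↔
      (m = l ∧ (j : ℕ) = l + (k - 1)) ∨ (m + 1 = l ∧ (j : ℕ) = m) := by
  simp only [Finset.ext_iff, mem_image_consIdx (by omega : 0 < k), mem_chainEdge,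
    mem_range_chainWindow, Fin.ext_iff] at hj ⊢
  constructor
  · -- testing both ends of each of the two intervals pins them down
    intro h
    have h₁ := h ⟨m, by omega⟩
    have h₂ := h ⟨m + k - 1, by omega⟩
    have h₃ := h ⟨l, by omega⟩
    have h₄ := h ⟨l + k - 2, by omega⟩
    simp only at h₁ h₂ h₃ h₄
    omega
  · intro h x
    omega

lemma adjT_chainE_consIdx_chainWindow (hk : 2 ≤ k) {l : ℕ} (hl : l + (k - 1) < n) (j : Fin n) :
    adjT n k (chainE n k) (consIdx j (chainWindow l hl)) =
      if (j : ℕ) = l + (k - 1) ∨ (j : ℕ) + 1 = l then ((k - 1).factorial : ℝ)⁻¹ else 0 := by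
  refine if_congr ?_ rfl rfl
  rw [consIdx_injective_iff (by omega), chainE, Finset.mem_image]
  simp only [chainWindow_injective hl, and_true, Finset.mem_range]
  by_cases hj : j ∈ Set.range (chainWindow l hl)
  · simp only [hj, not_true_eq_false, false_and, false_iff]
    rw [mem_range_chainWindow] at hj
    omega
  · simp only [hj, not_false_eq_true, true_and]
    constructor
    · rintro ⟨m, hm, h⟩
      rw [chainEdge_eq_image_consIdx_iff hk hl (by omega) hj] at h
      omega
    · rintro (h | h)
      · exact ⟨l, by omega, (chainEdge_eq_image_consIdx_iff hk hl (by omega) hj).mpr (by omega)⟩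
      · exact ⟨j, by omega, (chainEdge_eq_image_consIdx_iff hk hl (by omega) hj).mpr (by omega)⟩

lemma factorial_smul_tcontract_chainWindow (hk : 2 ≤ k) {m : ℕ} (hkm : k - 1 ≤ m) (hm : m < n) :
    ((k - 1).factorial : ℝ) • tcontract (adjT n k (chainE n k))
        (fun i => Pi.single (chainWindow (m - (k - 1)) (by omega) i) 1) =
      Pi.single (⟨m, hm⟩ : Fin n) 1 + fun j : Fin n => if (j : ℕ) + k = m then 1 else 0 := by
  rw [tcontract_single]
  funext j
  have hfac : ((k - 1).factorial : ℝ) ≠ 0 := by positivity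
  simp only [adjT_chainE_consIdx_chainWindow hk, Pi.smul_apply, Pi.add_apply, Pi.single_apply,
    Fin.ext_iff, smul_eq_mul, mul_ite, mul_inv_cancel₀ hfac, mul_zero]
  split_ifs <;> first | omega | norm_num

theorem ctrlSpace_chainE_eq_top (hk : 2 ≤ k) {Bc : Set (Fin n → ℝ)}
    (hB : ∀ i : Fin n, (i : ℕ) < k - 1 → Pi.single i 1 ∈ Bc) :
    ctrlSpace (adjT n k (chainE n k)) Bc = ⊤ := by
  set C := ctrlSpace (adjT n k (chainE n k)) Bc
  refine Submodule.eq_top_of_forall_single_mem ?_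
  rintro ⟨m, hm⟩
  induction m using Nat.strong_induction_on with
  | _ m ih =>
  by_cases hmk : m < k - 1
  · exact subset_ctrlSpace _ _ (hB _ hmk)
  have hwindow : tcontract (adjT n k (chainE n k))
      (fun i => Pi.single (chainWindow (m - (k - 1)) (by omega) i) 1) ∈ C :=
    tcontract_mem_ctrlSpace fun i => ih _ (by have := i.isLt; omega) _
  have hprev : (fun j : Fin n => if (j : ℕ) + k = m then (1 : ℝ) else 0) ∈ C := by
    by_cases hkm : k ≤ m
    · convert ih (m - k) (by omega) (by omega) using 1
      funext j
      simp only [Pi.single_apply, Fin.ext_iff]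
      split_ifs <;> first | rfl | omega
    · convert C.zero_mem using 1
      funext j
      exact if_neg (by omega)
  have := C.sub_mem (C.smul_mem ((k - 1).factorial : ℝ) hwindow) hprev
  rwa [factorial_smul_tcontract_chainWindow hk (by omega), add_sub_cancel_right] at this

end

theorem stmt10_general {n k : ℕ} (hk : 2 ≤ k) (hkn : k ≤ n) :
    (∃ S : Finset (Fin n), S.card = k - 1 ∧
        ctrlSpace (adjT n k (chainE n k))
          {x | ∃ s ∈ S, x = (Pi.single s 1 : Fin n → ℝ)} = ⊤)
      ∧ ∀ S : Finset (Fin n), S.card = k - 2 →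
        ctrlSpace (adjT n k (chainE n k))
          {x | ∃ s ∈ S, x = (Pi.single s 1 : Fin n → ℝ)} ≠ ⊤ := by
  refine ⟨⟨Finset.Iio ⟨k - 1, by omega⟩, Fin.card_Iio _, ?_⟩, fun S hS => ?_⟩
  · exact ctrlSpace_chainE_eq_top hk fun i hi =>
      ⟨i, Finset.mem_Iio.mpr (Fin.lt_def.mpr hi), rfl⟩
  · exact ctrlSpace_adjT_ne_top _ (by omega) (by omega)

/-- For even `k`, the minimum number of control nodes of the `k`-uniform hyperchain on
`n ≥ k` nodes is exactly `k−1`: some set of `k−1` nodes is controlling, while no set of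
`k−2` nodes is. -/
theorem stmt10 {n k : ℕ} (hkeven : Even k) (hk : 2 ≤ k) (hkn : k ≤ n) :
    (∃ S : Finset (Fin n), S.card = k - 1 ∧
        ctrlSpace (adjT n k (chainE n k))
          {x | ∃ s ∈ S, x = (Pi.single s 1 : Fin n → ℝ)} = ⊤)
      ∧ ∀ S : Finset (Fin n), S.card = k - 2 →
        ctrlSpace (adjT n k (chainE n k))
          {x | ∃ s ∈ S, x = (Pi.single s 1 : Fin n → ℝ)} ≠ ⊤ :=
  stmt10_general hk hkn
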